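/- Let h : (0,∞) → [1,∞) satisfy 1 ≤ h(x) for all x > 0, sup h < ∞, lim_{x→∞} h(x) = 1, and limsup_{x→∞} (h(x)-1)·log x < ∞. Then there exists a constant K > 0 such that x^{h(x)} ≤ K(1+x) for all x ∈ (0,∞). -/

import Mathlib

open Real Filter Set

/-! Once `(h x - 1) log x ≤ M`, the excess factor `x ^ (h x - 1) = exp ((h x - 1) log x)` is at most
`exp M`, so `x ^ h x ≤ exp M * x`; on the remaining bounded range `(0, X]` the power is at most
`X ^ sup h`. -/

lemma Real.rpow_le_exp_mul_self {x y M : ℝ} (hx : 0 < x) (h : (y - 1) * log x ≤ M) :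
    x ^ y ≤ exp M * x := by
  have hsplit : x ^ y = x ^ (y - 1) * x := by
    rw [← rpow_add_one hx.ne', sub_add_cancel]
  have hpow : x ^ (y - 1) ≤ exp M := by
    rw [rpow_def_of_pos hx, mul_comm]
    exact exp_le_exp.mpr h
  rw [hsplit]
  exact mul_le_mul_of_nonneg_right hpow hx.le

lemma Real.rpow_le_rpow_of_le_of_exponent_le {x y X C : ℝ} (hx : 0 ≤ x) (hxX : x ≤ X) (hX : 1 ≤ X)
    (hy : 0 ≤ y) (hyC : y ≤ C) : x ^ y ≤ X ^ C :=
  calc x ^ y ≤ max 1 x ^ y := rpow_le_rpow hx (le_max_right 1 x) hy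
    _ ≤ max 1 x ^ C := rpow_le_rpow_of_exponent_le (le_max_left 1 x) hyC
    _ ≤ X ^ C := rpow_le_rpow (by positivity) (max_le hX hxX) (hy.trans hyC)

theorem stmt_0_general (h : ℝ → ℝ)
    (h1 : ∀ x > 0, 1 ≤ h x)
    (hbdd : BddAbove (h '' Set.Ioi 0))
    (hlimsup : ∃ M : ℝ, ∀ᶠ x in atTop, (h x - 1) * Real.log x ≤ M) :
    ∃ K > 0, ∀ x > 0, x ^ h x ≤ K * (1 + x) := by
  obtain ⟨M, hM⟩ := hlimsup
  obtain ⟨X₀, hX₀⟩ := eventually_atTop.mp hM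
  set X := max 1 X₀
  set C := sSup (h '' Ioi 0)
  set K := max (exp M) (X ^ C)
  have hC : ∀ x > 0, h x ≤ C := fun x hx => le_csSup hbdd ⟨x, hx, rfl⟩
  refine ⟨K, (exp_pos M).trans_le (le_max_left _ _), fun x hx => ?_⟩
  rcases le_or_gt x X with hxX | hXx
  · have hpow : x ^ h x ≤ X ^ C := rpow_le_rpow_of_le_of_exponent_le hx.le hxX
      (le_max_left _ _) (by linarith [h1 x hx]) (hC x hx)
    nlinarith [le_max_right (exp M) (X ^ C), le_max_left (exp M) (X ^ C), exp_pos M]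
  · have hpow : x ^ h x ≤ exp M * x :=
      rpow_le_exp_mul_self hx (hX₀ x ((le_max_right 1 X₀).trans hXx.le))
    nlinarith [le_max_left (exp M) (X ^ C), exp_pos M]

theorem stmt_0 (h : ℝ → ℝ)
    (h1 : ∀ x > 0, 1 ≤ h x)
    (hbdd : BddAbove (h '' Set.Ioi 0))
    (hlim : Tendsto h atTop (nhds 1))
    (hlimsup : ∃ M : ℝ, ∀ᶠ x in atTop, (h x - 1) * Real.log x ≤ M) :
    ∃ K > 0, ∀ x > 0, x ^ h x ≤ K * (1 + x) :=
  stmt_0_general h h1 hbdd hlimsup
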